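/- arXiv:2001.10051 — 4 statements merged into one kernel-verified Lean document; each statement's English description precedes it below -/
import Mathlib

section
/- Let 1 ≤ p < ∞ and 1 ≤ r ≤ ∞. If F : [0,∞) → [0,∞) is locally absolutely continuous with F ∈ L^p([0,∞); ℝ), G ∈ L^r([0,∞); ℝ), and (d/dt)F(t) ≤ G(t) for a.e. t ∈ [0,∞), then lim_{t→∞} F(t) = 0. -/
/-!
Since `F' ≤ G`, going backwards from a time `t` the function `F` can drop by at most
`∫_{t-δ}^t |G|`. Writing `|G| ≤ C + H` with `H` integrable (`H = |G|^r`, or `H = 0` when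
`r = ∞`), this window integral is at most `C δ + o(1)`. Hence for small `δ` and large `t`,
`F t ≥ ε` forces `F ≥ ε / 2` on `[t - δ, t]`, so `∫_{t-δ}^t F^p ≥ (ε / 2)^p δ`, while this
integral tends to `0` because `F^p` is integrable.
-/

open Set MeasureTheory Filter Topology
open scoped ENNReal

theorem tendsto_setIntegral_Icc_sub_atTop {E : Type*} [NormedAddCommGroup E] [NormedSpace ℝ E]
    {f : ℝ → E} {a : ℝ} (hf : IntegrableOn f (Ici a)) (δ : ℝ) :
    Tendsto (fun t => ∫ x in Icc (t - δ) t, f x) atTop (𝓝 0) := by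
  have hlim : Tendsto (fun t => ∫ x in Ici a, (Icc (t - δ) t).indicator f x) atTop
      (𝓝 (∫ _ in Ici a, (0 : E))) := by
    refine tendsto_integral_filter_of_dominated_convergence (‖f ·‖)
      (.of_forall fun t => hf.1.indicator measurableSet_Icc)
      (.of_forall fun t => .of_forall fun x => norm_indicator_le_norm_self f x) hf.norm
      (.of_forall fun x => tendsto_const_nhds.congr' ?_)
    filter_upwards [eventually_gt_atTop (x + δ)] with t ht
    exact (indicator_of_notMem (fun hx => by linarith [hx.1]) f).symm
  rw [integral_zero] at hlim
  refine hlim.congr' ?_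
  filter_upwards [eventually_ge_atTop (a + δ)] with t ht
  rw [setIntegral_indicator measurableSet_Icc,
    inter_eq_right.2 (Icc_subset_Ici_self.trans (Ici_subset_Ici.2 (by linarith)))]

theorem MeasureTheory.MemLp.exists_norm_le_const_add_integrable {α E : Type*} [MeasurableSpace α]
    {μ : Measure α} [NormedAddCommGroup E] {f : α → E} {r : ℝ≥0∞} (hf : MemLp f r μ) (hr : 1 ≤ r) :
    ∃ C : ℝ, ∃ H : α → ℝ, Integrable H μ ∧ ∀ᵐ x ∂μ, ‖f x‖ ≤ C + H x := by
  rcases eq_or_ne r ⊤ with rfl | hrtop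
  · refine ⟨(eLpNormEssSup f μ).toReal, 0, integrable_zero _ _ _, ?_⟩
    have hfin : eLpNormEssSup f μ ≠ ⊤ := by simpa [eLpNorm_exponent_top] using hf.2.ne
    filter_upwards [ae_le_eLpNormEssSup (f := f) (μ := μ)] with x hx
    simpa using ENNReal.toReal_mono hfin hx
  · have hr1 : 1 ≤ r.toReal := by simpa using ENNReal.toReal_mono hrtop hr
    refine ⟨1, (‖f ·‖ ^ r.toReal), hf.integrable_norm_rpow (by positivity) hrtop,
      .of_forall fun x => ?_⟩
    rcases le_or_gt ‖f x‖ 1 with h | h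
    · linarith [Real.rpow_nonneg (norm_nonneg (f x)) r.toReal]
    · linarith [Real.self_le_rpow_of_one_le h.le hr1]

theorem MeasureTheory.MemLp.integrableOn_of_subset {α E : Type*} [MeasurableSpace α]
    {μ : Measure α} [NormedAddCommGroup E] {f : α → E} {r : ℝ≥0∞} {s t : Set α}
    (hf : MemLp f r (μ.restrict s)) (hr : 1 ≤ r) (ht : MeasurableSet t) (hts : t ⊆ s)
    (hμt : μ t < ∞) : IntegrableOn f t μ := by
  have : Fact (μ t < ∞) := ⟨hμt⟩
  have hft := hf.restrict t
  rw [Measure.restrict_restrict ht, inter_eq_left.2 hts] at hft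
  exact hft.integrable hr

theorem exists_pos_eventually_setIntegral_Icc_sub_norm_le {E : Type*} [NormedAddCommGroup E]
    {G : ℝ → E} {r : ℝ≥0∞} {a : ℝ} (hG : MemLp G r (volume.restrict (Ici a))) (hr : 1 ≤ r)
    {ε : ℝ} (hε : 0 < ε) : ∃ δ > 0, ∀ᶠ t in atTop, ∫ x in Icc (t - δ) t, ‖G x‖ ≤ ε := by
  obtain ⟨C, H, hH, hGH⟩ := hG.exists_norm_le_const_add_integrable hr
  replace hH : IntegrableOn H (Ici a) := hH
  set δ := ε / (2 * (|C| + 1)) with hδdef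
  have hδ : 0 < δ := by positivity
  have hCδ : C * δ ≤ ε / 2 := by
    have : (|C| + 1) * δ = ε / 2 := by rw [hδdef]; field_simp
    nlinarith [le_abs_self C]
  refine ⟨δ, hδ, ?_⟩
  have hHwin := (tendsto_setIntegral_Icc_sub_atTop hH δ).eventually
    (ge_mem_nhds (half_pos hε))
  filter_upwards [hHwin, eventually_ge_atTop (a + δ)] with t hHt ht
  have hwin : Icc (t - δ) t ⊆ Ici a := Icc_subset_Ici_self.trans (Ici_subset_Ici.2 (by linarith))
  have hHt' : IntegrableOn H (Icc (t - δ) t) := hH.mono_set hwin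
  have hGt : IntegrableOn (‖G ·‖) (Icc (t - δ) t) :=
    (hG.integrableOn_of_subset hr measurableSet_Icc hwin measure_Icc_lt_top).norm
  calc ∫ x in Icc (t - δ) t, ‖G x‖
      ≤ ∫ x in Icc (t - δ) t, (C + H x) :=
        setIntegral_mono_ae_restrict hGt ((integrable_const C).add hHt')
          (ae_restrict_of_ae_restrict_of_subset hwin hGH)
    _ = C * δ + ∫ x in Icc (t - δ) t, H x := by
        rw [integral_add (integrable_const C) hHt', setIntegral_const,
          Real.volume_real_Icc_of_le (by linarith), smul_eq_mul, sub_sub_cancel, mul_comm]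
    _ ≤ ε := by linarith

theorem sub_le_setIntegral_norm_of_ae_le {F F' G : ℝ → ℝ} {a b s t : ℝ}
    (hrep : ∀ u, a ≤ u → F u = F a + ∫ x in a..u, F' x) (hF' : IntegrableOn F' (Icc a t))
    (hG : IntegrableOn G (Icc b t)) (hle : ∀ᵐ x, x ∈ Icc b t → F' x ≤ G x) (hab : a ≤ b)
    (hs : s ∈ Icc b t) : F t - F s ≤ ∫ x in Icc b t, ‖G x‖ := by
  obtain ⟨hbs, hst⟩ := hs
  have has : a ≤ s := hab.trans hbs
  have hF'ii : ∀ u v, a ≤ u → u ≤ v → v ≤ t → IntervalIntegrable F' volume u v :=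
    fun u v hau huv hvt => (intervalIntegrable_iff_integrableOn_Icc_of_le huv).2
      (hF'.mono_set (Icc_subset_Icc hau hvt))
  have hGs : IntegrableOn G (Icc s t) := hG.mono_set (Icc_subset_Icc_left hbs)
  have hFTC : F t - F s = ∫ x in s..t, F' x := by
    rw [hrep t (has.trans hst), hrep s has, add_sub_add_left_eq_sub,
      intervalIntegral.integral_interval_sub_left (hF'ii a t le_rfl (has.trans hst) le_rfl)
        (hF'ii a s le_rfl has hst)]
  calc F t - F s ≤ ∫ x in s..t, G x := hFTC ▸ intervalIntegral.integral_mono_ae_restrict hst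
        (hF'ii s t has hst le_rfl) ((intervalIntegrable_iff_integrableOn_Icc_of_le hst).2 hGs)
        ((ae_restrict_iff' measurableSet_Icc).2 (hle.mono fun x hx hxs =>
          hx ⟨hbs.trans hxs.1, hxs.2⟩))
    _ ≤ ∫ x in Ioc s t, ‖G x‖ := by
      rw [intervalIntegral.integral_of_le hst]
      exact setIntegral_mono (hGs.mono_set Ioc_subset_Icc_self)
        (hGs.mono_set Ioc_subset_Icc_self).norm fun x => Real.le_norm_self (G x)
    _ ≤ ∫ x in Icc b t, ‖G x‖ :=
      setIntegral_mono_set hG.norm (.of_forall fun x => norm_nonneg _)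
        (Ioc_subset_Icc_self.trans (Icc_subset_Icc_left hbs)).eventuallyLE

/-- If `1 ≤ p < ∞`, `1 ≤ r ≤ ∞`, `F : [0,∞) → [0,∞)` is locally absolutely continuous with
`F ∈ L^p([0,∞))`, `G ∈ L^r([0,∞))` and the a.e. derivative of `F` satisfies `F' ≤ G` a.e.,
then `F(t) → 0` as `t → ∞`. -/
theorem stmt_1 (p r : ℝ≥0∞) (hp1 : 1 ≤ p) (hptop : p ≠ ⊤) (hr1 : 1 ≤ r)
    (F F' G : ℝ → ℝ)
    (hFnn : ∀ t : ℝ, 0 ≤ t → 0 ≤ F t)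
    (hrep : ∀ t : ℝ, 0 ≤ t → F t = F 0 + ∫ s in (0:ℝ)..t, F' s)
    (hF'int : ∀ T : ℝ, 0 ≤ T → IntegrableOn F' (Icc 0 T))
    (hFp : MemLp F p (volume.restrict (Ici (0:ℝ))))
    (hGr : MemLp G r (volume.restrict (Ici (0:ℝ))))
    (hle : ∀ᵐ t ∂(volume : Measure ℝ), t ∈ Ici (0:ℝ) → F' t ≤ G t) :
    Tendsto F atTop (nhds 0) := by
  have hp0 : p ≠ 0 := (zero_lt_one.trans_le hp1).ne'
  set q := p.toReal
  have hq : 0 < q := ENNReal.toReal_pos hp0 hptop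
  have hFq : IntegrableOn (fun x => ‖F x‖ ^ q) (Ici 0) := hFp.integrable_norm_rpow hp0 hptop
  refine tendsto_order.2 ⟨fun b hb => ?_, fun ε hε => ?_⟩
  · filter_upwards [eventually_ge_atTop 0] with t ht using hb.trans_le (hFnn t ht)
  obtain ⟨δ, hδ, hGwin⟩ := exists_pos_eventually_setIntegral_Icc_sub_norm_le hGr hr1 (half_pos hε)
  have hFwin := (tendsto_setIntegral_Icc_sub_atTop hFq δ).eventually
    (gt_mem_nhds (show 0 < (ε / 2) ^ q * δ by positivity))
  filter_upwards [hGwin, hFwin, eventually_ge_atTop δ] with t hGt hFt htδ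
  by_contra! hεt
  have hwin : Icc (t - δ) t ⊆ Ici 0 := Icc_subset_Ici_self.trans (Ici_subset_Ici.2 (by linarith))
  have hGloc : IntegrableOn G (Icc (t - δ) t) :=
    hGr.integrableOn_of_subset hr1 measurableSet_Icc hwin measure_Icc_lt_top
  have hFs : ∀ s ∈ Icc (t - δ) t, (ε / 2) ^ q ≤ ‖F s‖ ^ q := by
    intro s hs
    have hdrop := sub_le_setIntegral_norm_of_ae_le hrep (hF'int t (by linarith)) hGloc
      (hle.mono fun x hx hxs => hx (hwin hxs)) (by linarith) hs
    rw [Real.norm_of_nonneg (hFnn s (hwin hs))]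
    exact Real.rpow_le_rpow (by positivity) (by linarith) hq.le
  have hlower := setIntegral_ge_of_const_le_real measurableSet_Icc measure_Icc_lt_top.ne hFs
    (hFq.mono_set hwin)
  rw [Real.volume_real_Icc_of_le (by linarith), sub_sub_cancel] at hlower
  linarith
end

section
/- Let f : ℝ^n → ℝ ∪ {+∞} and g : ℝ^m → ℝ ∪ {+∞} be proper, lower semicontinuous, and convex, let H ∈ C¹(ℝ^n × ℝ^m) with L-Lipschitz gradient, let γ₁, γ₂ > 0 and λ ∈ [0,1]. Define Γ : ℝ^n × ℝ^m → ℝ^n × ℝ^m by Γ(x,y) = (u,v) where u = prox_{f/(γ₁L)}(x − (1/(γ₁L))∇ₓH(x,y)) − x and v = prox_{g/(γ₂L)}(y − (1/(γ₂L))∇_yH((1−λ)(u+x)+λx, y)) − y. Then Γ is Lipschitz continuous with constant β(λ,γ₁,γ₂) = (6 + 4/γ₁² + (4 + 24(1−λ)²)/γ₂² + 16(1−λ)²/(γ₁²γ₂²))^{1/2}. -/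
/-!
The proximal map `P` of a proper convex function, characterised by the minimality of `P w` for
`u ↦ f u + c/2 ‖u - w‖²`, satisfies the variational inequality
`f q - f (P w) + c ⟪P w - w, q - P w⟫ ≥ 0`: compare `P w` with the points of the segment towards
`q`, divide by the step `t` and let `t → 0`. Adding it for `w` and `w'` gives firm
nonexpansiveness, hence `P` is `1`-Lipschitz. By the triangle inequality,
`‖u - u'‖ ≤ 2‖x - x'‖ + e₁`, the point at which `∇_yH` is evaluated moves by at most
`‖x - x'‖ + (1 - λ) e₁`, and `‖v - v'‖ ≤ 2‖y - y'‖ + e₂`, where `e₁, e₂` are the differences of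
the scaled gradient steps, controlled by the Lipschitz bound on `∇H`. Young's inequality
`(a + b)² ≤ a²/θ + b²/(1 - θ)` with `θ = 2/3` and `θ = 13/16` turns these into the constant.
-/

open Set Filter Topology
open scoped RealInnerProductSpace

lemma nonneg_of_forall_nonneg_add_mul {C D : ℝ} (h : ∀ t ∈ Ioc (0 : ℝ) 1, 0 ≤ C + t * D) :
    0 ≤ C := by
  have hlim : Tendsto (fun t : ℝ => C + t * D) (𝓝[>] 0) (𝓝 C) := by
    have hcont : Continuous fun t : ℝ => C + t * D := by fun_prop
    simpa using (hcont.tendsto 0).mono_left nhdsWithin_le_nhds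
  exact ge_of_tendsto hlim (eventually_of_mem (Ioc_mem_nhdsGT one_pos) h)

lemma add_sq_le_div_add_div {θ : ℝ} (h0 : 0 < θ) (h1 : θ < 1) (x y : ℝ) :
    (x + y) ^ 2 ≤ x ^ 2 / θ + y ^ 2 / (1 - θ) := by
  have h1' : 0 < 1 - θ := sub_pos.2 h1
  rw [div_add_div _ _ h0.ne' h1'.ne', le_div_iff₀ (mul_pos h0 h1')]
  nlinarith [sq_nonneg ((1 - θ) * x - θ * y)]

section Prox

variable {E : Type*} [NormedAddCommGroup E] {f : E → EReal} {c : ℝ} {P : E → E}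

lemma prox_ne_top (hproper : ∃ u, f u ≠ ⊤)
    (hP : ∀ w u, f (P w) + ((c / 2 * ‖P w - w‖ ^ 2 : ℝ) : EReal)
      ≤ f u + ((c / 2 * ‖u - w‖ ^ 2 : ℝ) : EReal)) (w : E) :
    f (P w) ≠ ⊤ := by
  obtain ⟨u, hu⟩ := hproper
  intro htop
  have hmin := hP w u
  rw [htop, EReal.top_add_coe, top_le_iff] at hmin
  exact EReal.add_ne_top hu (EReal.coe_ne_top _) hmin

variable [InnerProductSpace ℝ E]

lemma prox_variational_inequality (hnbot : ∀ u, f u ≠ ⊥)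
    (hconv : ∀ a b : E, ∀ t : ℝ, 0 ≤ t → t ≤ 1 →
      f (t • a + (1 - t) • b) ≤ (t : EReal) * f a + ((1 - t : ℝ) : EReal) * f b)
    (hP : ∀ w u, f (P w) + ((c / 2 * ‖P w - w‖ ^ 2 : ℝ) : EReal)
      ≤ f u + ((c / 2 * ‖u - w‖ ^ 2 : ℝ) : EReal))
    (w : E) {q : E} (hq : f q ≠ ⊤) (hp : f (P w) ≠ ⊤) :
    0 ≤ (f q).toReal - (f (P w)).toReal + c * ⟪P w - w, q - P w⟫ := by
  set p := P w
  obtain ⟨Fp, hFp⟩ : ∃ r : ℝ, f p = r := ⟨_, (EReal.coe_toReal hp (hnbot p)).symm⟩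
  obtain ⟨Fq, hFq⟩ : ∃ r : ℝ, f q = r := ⟨_, (EReal.coe_toReal hq (hnbot q)).symm⟩
  rw [hFp, hFq, EReal.toReal_coe, EReal.toReal_coe]
  refine nonneg_of_forall_nonneg_add_mul (D := c / 2 * ‖q - p‖ ^ 2) fun t ⟨ht0, ht1⟩ => ?_
  have hseg : ‖(t • q + (1 - t) • p) - w‖ ^ 2
      = ‖p - w‖ ^ 2 + 2 * (t * ⟪p - w, q - p⟫) + t ^ 2 * ‖q - p‖ ^ 2 := by
    rw [show (t • q + (1 - t) • p) - w = (p - w) + t • (q - p) by module, norm_add_sq_real,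
      real_inner_smul_right, norm_smul, Real.norm_of_nonneg ht0.le]
    ring
  have hmin : Fp + c / 2 * ‖p - w‖ ^ 2
      ≤ t * Fq + (1 - t) * Fp + c / 2 * ‖(t • q + (1 - t) • p) - w‖ ^ 2 := by
    have h := (hP w (t • q + (1 - t) • p)).trans (add_le_add_left (hconv q p t ht0.le ht1) _)
    rw [hFp, hFq] at h
    exact_mod_cast h
  rw [hseg] at hmin
  have hscaled : 0 ≤ t * (Fq - Fp + c * ⟪p - w, q - p⟫ + t * (c / 2 * ‖q - p‖ ^ 2)) := by
    nlinarith
  exact nonneg_of_mul_nonneg_right hscaled ht0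

lemma prox_firmly_nonexpansive (hproper : ∃ u, f u ≠ ⊤) (hnbot : ∀ u, f u ≠ ⊥)
    (hconv : ∀ a b : E, ∀ t : ℝ, 0 ≤ t → t ≤ 1 →
      f (t • a + (1 - t) • b) ≤ (t : EReal) * f a + ((1 - t : ℝ) : EReal) * f b)
    (hc : 0 < c)
    (hP : ∀ w u, f (P w) + ((c / 2 * ‖P w - w‖ ^ 2 : ℝ) : EReal)
      ≤ f u + ((c / 2 * ‖u - w‖ ^ 2 : ℝ) : EReal)) (w w' : E) :
    ‖P w - P w'‖ ^ 2 ≤ ⟪w - w', P w - P w'⟫ := by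
  have h₁ := prox_variational_inequality hnbot hconv hP w (prox_ne_top hproper hP w')
    (prox_ne_top hproper hP w)
  have h₂ := prox_variational_inequality hnbot hconv hP w' (prox_ne_top hproper hP w)
    (prox_ne_top hproper hP w')
  have hsum : ⟪P w - w, P w' - P w⟫ + ⟪P w' - w', P w - P w'⟫
      = ⟪w - w', P w - P w'⟫ - ‖P w - P w'‖ ^ 2 := by
    rw [← real_inner_self_eq_norm_sq]
    simp only [inner_sub_left, inner_sub_right, real_inner_comm]
    ring
  have hscaled : 0 ≤ c * (⟪w - w', P w - P w'⟫ - ‖P w - P w'‖ ^ 2) := by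
    rw [← hsum]
    linarith
  linarith [nonneg_of_mul_nonneg_right hscaled hc]

lemma lipschitzWith_one_prox (hproper : ∃ u, f u ≠ ⊤) (hnbot : ∀ u, f u ≠ ⊥)
    (hconv : ∀ a b : E, ∀ t : ℝ, 0 ≤ t → t ≤ 1 →
      f (t • a + (1 - t) • b) ≤ (t : EReal) * f a + ((1 - t : ℝ) : EReal) * f b)
    (hc : 0 < c)
    (hP : ∀ w u, f (P w) + ((c / 2 * ‖P w - w‖ ^ 2 : ℝ) : EReal)
      ≤ f u + ((c / 2 * ‖u - w‖ ^ 2 : ℝ) : EReal)) :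
    LipschitzWith 1 P := by
  refine LipschitzWith.of_dist_le_mul fun w w' => ?_
  rw [NNReal.coe_one, one_mul, dist_eq_norm, dist_eq_norm]
  have h := (prox_firmly_nonexpansive hproper hnbot hconv hc hP w w').trans
    (real_inner_le_norm _ _)
  nlinarith [norm_nonneg (P w - P w'), norm_nonneg (w - w')]

end Prox

section ForwardBackward

variable {E : Type*} [NormedAddCommGroup E] {P : E → E}

lemma norm_prox_step_sub_le (hP : LipschitzWith 1 P) (x x' d d' : E) :
    ‖P (x - d) - P (x' - d')‖ ≤ ‖x - x'‖ + ‖d - d'‖ :=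
  calc ‖P (x - d) - P (x' - d')‖ ≤ ‖(x - d) - (x' - d')‖ := by
        simpa using hP.norm_sub_le (x - d) (x' - d')
    _ = ‖(x - x') - (d - d')‖ := by congr 1; abel
    _ ≤ ‖x - x'‖ + ‖d - d'‖ := norm_sub_le _ _

lemma norm_prox_residual_sub_le (hP : LipschitzWith 1 P) (x x' d d' : E) :
    ‖(P (x - d) - x) - (P (x' - d') - x')‖ ≤ 2 * ‖x - x'‖ + ‖d - d'‖ :=
  calc ‖(P (x - d) - x) - (P (x' - d') - x')‖
        = ‖(P (x - d) - P (x' - d')) - (x - x')‖ := by congr 1; abel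
    _ ≤ ‖P (x - d) - P (x' - d')‖ + ‖x - x'‖ := norm_sub_le _ _
    _ ≤ 2 * ‖x - x'‖ + ‖d - d'‖ := by linarith [norm_prox_step_sub_le hP x x' d d']

variable [NormedSpace ℝ E]

lemma norm_convex_combo_sub_le {s : ℝ} (hs0 : 0 ≤ s) (hs1 : s ≤ 1) (p p' x x' : E) :
    ‖((1 - s) • p + s • x) - ((1 - s) • p' + s • x')‖ ≤ (1 - s) * ‖p - p'‖ + s * ‖x - x'‖ :=
  calc ‖((1 - s) • p + s • x) - ((1 - s) • p' + s • x')‖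
        = ‖(1 - s) • (p - p') + s • (x - x')‖ := by congr 1; module
    _ ≤ ‖(1 - s) • (p - p')‖ + ‖s • (x - x')‖ := norm_add_le _ _
    _ = (1 - s) * ‖p - p'‖ + s * ‖x - x'‖ := by
        rw [norm_smul, norm_smul, Real.norm_of_nonneg (sub_nonneg.2 hs1), Real.norm_of_nonneg hs0]

lemma sq_norm_inv_mul_smul_sub_le {γ L M : ℝ} (hL : L ≠ 0) {v v' : E}
    (h : ‖v - v'‖ ^ 2 ≤ L ^ 2 * M) :
    ‖(γ * L)⁻¹ • v - (γ * L)⁻¹ • v'‖ ^ 2 ≤ 1 / γ ^ 2 * M := by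
  rw [← smul_sub, norm_smul, mul_pow, Real.norm_eq_abs, sq_abs]
  calc (γ * L)⁻¹ ^ 2 * ‖v - v'‖ ^ 2 ≤ (γ * L)⁻¹ ^ 2 * (L ^ 2 * M) := by gcongr
    _ = 1 / γ ^ 2 * M := by field_simp

end ForwardBackward

lemma sq_add_sq_le_of_sequential_bounds {a b du dv zn e₁ e₂ s k₁ k₂ : ℝ}
    (hdu0 : 0 ≤ du) (hdv0 : 0 ≤ dv) (hzn0 : 0 ≤ zn) (hk₂ : 0 ≤ k₂)
    (hdu : du ≤ 2 * a + e₁) (he₁ : e₁ ^ 2 ≤ k₁ * (a ^ 2 + b ^ 2))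
    (hzn : zn ≤ a + s * e₁) (he₂ : e₂ ^ 2 ≤ k₂ * (zn ^ 2 + b ^ 2))
    (hdv : dv ≤ 2 * b + e₂) :
    du ^ 2 + dv ^ 2
      ≤ (6 + 4 * k₁ + (4 + 24 * s ^ 2) * k₂ + 16 * s ^ 2 * k₁ * k₂) * (a ^ 2 + b ^ 2) := by
  set N := a ^ 2 + b ^ 2
  have hdu_sq : du ^ 2 ≤ 6 * a ^ 2 + 3 * e₁ ^ 2 := by
    have := add_sq_le_div_add_div (θ := 2 / 3) (by norm_num) (by norm_num) (2 * a) e₁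
    norm_num at this
    nlinarith [pow_le_pow_left₀ hdu0 hdu 2]
  have hdv_sq : dv ^ 2 ≤ 6 * b ^ 2 + 3 * e₂ ^ 2 := by
    have := add_sq_le_div_add_div (θ := 2 / 3) (by norm_num) (by norm_num) (2 * b) e₂
    norm_num at this
    nlinarith [pow_le_pow_left₀ hdv0 hdv 2]
  have hzn_sq : zn ^ 2 ≤ 16 / 13 * a ^ 2 + 16 / 3 * s ^ 2 * (k₁ * N) := by
    have := add_sq_le_div_add_div (θ := 13 / 16) (by norm_num) (by norm_num) a (s * e₁)
    norm_num at this
    nlinarith [pow_le_pow_left₀ hzn0 hzn 2, mul_le_mul_of_nonneg_left he₁ (sq_nonneg s)]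
  have he₂' : e₂ ^ 2 ≤ k₂ * (16 / 13 * a ^ 2 + 16 / 3 * s ^ 2 * (k₁ * N) + b ^ 2) :=
    he₂.trans (by gcongr)
  have hN : 0 ≤ N := by positivity
  nlinarith [mul_nonneg hk₂ hN, mul_nonneg (mul_nonneg (sq_nonneg s) hk₂) hN,
    mul_nonneg hk₂ (sq_nonneg a), mul_nonneg hk₂ (sq_nonneg b)]

theorem stmt_5_general {n m : ℕ}
    (f : EuclideanSpace ℝ (Fin n) → EReal) (g : EuclideanSpace ℝ (Fin m) → EReal)
    (hfproper : ∃ u, f u ≠ ⊤) (hfnbot : ∀ u, f u ≠ ⊥)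
    (hfconv : ∀ a b : EuclideanSpace ℝ (Fin n), ∀ t : ℝ, 0 ≤ t → t ≤ 1 →
      f (t • a + (1 - t) • b) ≤ (t : EReal) * f a + ((1 - t : ℝ) : EReal) * f b)
    (hgproper : ∃ u, g u ≠ ⊤) (hgnbot : ∀ u, g u ≠ ⊥)
    (hgconv : ∀ a b : EuclideanSpace ℝ (Fin m), ∀ t : ℝ, 0 ≤ t → t ≤ 1 →
      g (t • a + (1 - t) • b) ≤ (t : EReal) * g a + ((1 - t : ℝ) : EReal) * g b)
    (gx : EuclideanSpace ℝ (Fin n) × EuclideanSpace ℝ (Fin m) → EuclideanSpace ℝ (Fin n))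
    (gy : EuclideanSpace ℝ (Fin n) × EuclideanSpace ℝ (Fin m) → EuclideanSpace ℝ (Fin m))
    (L γ₁ γ₂ lam : ℝ) (hL : 0 < L) (hγ₁ : 0 < γ₁) (hγ₂ : 0 < γ₂)
    (hlam0 : 0 ≤ lam) (hlam1 : lam ≤ 1)
    (hLip : ∀ p q, ‖gx p - gx q‖ ^ 2 + ‖gy p - gy q‖ ^ 2
      ≤ L ^ 2 * (‖p.1 - q.1‖ ^ 2 + ‖p.2 - q.2‖ ^ 2))
    (proxf : EuclideanSpace ℝ (Fin n) → EuclideanSpace ℝ (Fin n))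
    (proxg : EuclideanSpace ℝ (Fin m) → EuclideanSpace ℝ (Fin m))
    (hproxf : ∀ w u, f (proxf w) + ((γ₁ * L / 2 * ‖proxf w - w‖ ^ 2 : ℝ) : EReal)
      ≤ f u + ((γ₁ * L / 2 * ‖u - w‖ ^ 2 : ℝ) : EReal))
    (hproxg : ∀ w u, g (proxg w) + ((γ₂ * L / 2 * ‖proxg w - w‖ ^ 2 : ℝ) : EReal)
      ≤ g u + ((γ₂ * L / 2 * ‖u - w‖ ^ 2 : ℝ) : EReal)) :
    ∀ (x x' : EuclideanSpace ℝ (Fin n)) (y y' : EuclideanSpace ℝ (Fin m))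
      (u u' : EuclideanSpace ℝ (Fin n)) (v v' : EuclideanSpace ℝ (Fin m)),
      u = proxf (x - (γ₁ * L)⁻¹ • gx (x, y)) - x →
      u' = proxf (x' - (γ₁ * L)⁻¹ • gx (x', y')) - x' →
      v = proxg (y - (γ₂ * L)⁻¹ • gy ((1 - lam) • (u + x) + lam • x, y)) - y →
      v' = proxg (y' - (γ₂ * L)⁻¹ • gy ((1 - lam) • (u' + x') + lam • x', y')) - y' →
      ‖u - u'‖ ^ 2 + ‖v - v'‖ ^ 2
        ≤ (6 + 4 / γ₁ ^ 2 + (4 + 24 * (1 - lam) ^ 2) / γ₂ ^ 2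
            + 16 * (1 - lam) ^ 2 / (γ₁ ^ 2 * γ₂ ^ 2)) * (‖x - x'‖ ^ 2 + ‖y - y'‖ ^ 2) := by
  intro x x' y y' u u' v v' hu hu' hv hv'
  have hPf := lipschitzWith_one_prox hfproper hfnbot hfconv (by positivity) hproxf
  have hPg := lipschitzWith_one_prox hgproper hgnbot hgconv (by positivity) hproxg
  set z := (1 - lam) • (u + x) + lam • x
  set z' := (1 - lam) • (u' + x') + lam • x'
  set e₁ := ‖(γ₁ * L)⁻¹ • gx (x, y) - (γ₁ * L)⁻¹ • gx (x', y')‖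
  set e₂ := ‖(γ₂ * L)⁻¹ • gy (z, y) - (γ₂ * L)⁻¹ • gy (z', y')‖
  have he₁ : e₁ ^ 2 ≤ 1 / γ₁ ^ 2 * (‖x - x'‖ ^ 2 + ‖y - y'‖ ^ 2) :=
    sq_norm_inv_mul_smul_sub_le hL.ne' <|
      (le_add_of_nonneg_right (sq_nonneg _)).trans (hLip (x, y) (x', y'))
  have he₂ : e₂ ^ 2 ≤ 1 / γ₂ ^ 2 * (‖z - z'‖ ^ 2 + ‖y - y'‖ ^ 2) :=
    sq_norm_inv_mul_smul_sub_le hL.ne' <|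
      (le_add_of_nonneg_left (sq_nonneg _)).trans (hLip (z, y) (z', y'))
  have hdu : ‖u - u'‖ ≤ 2 * ‖x - x'‖ + e₁ := hu ▸ hu' ▸ norm_prox_residual_sub_le hPf _ _ _ _
  have hdv : ‖v - v'‖ ≤ 2 * ‖y - y'‖ + e₂ := hv ▸ hv' ▸ norm_prox_residual_sub_le hPg _ _ _ _
  have hdz : ‖z - z'‖ ≤ ‖x - x'‖ + (1 - lam) * e₁ := by
    have hstep := norm_prox_step_sub_le hPf x x' ((γ₁ * L)⁻¹ • gx (x, y))
      ((γ₁ * L)⁻¹ • gx (x', y'))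
    rw [sub_eq_iff_eq_add.1 hu.symm, sub_eq_iff_eq_add.1 hu'.symm] at hstep
    have := norm_convex_combo_sub_le hlam0 hlam1 (u + x) (u' + x') x x'
    nlinarith [sub_nonneg.2 hlam1]
  refine (sq_add_sq_le_of_sequential_bounds (norm_nonneg _) (norm_nonneg _) (norm_nonneg _)
    (by positivity) hdu he₁ hdz he₂ hdv).trans_eq ?_
  ring

/-- For `f, g` proper lsc convex, `H ∈ C¹` with `L`-Lipschitz gradient, `γ₁, γ₂ > 0`,
`λ ∈ [0,1]`, the operator `Γ(x,y) = (u,v)` with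
`u = prox_{f/(γ₁L)}(x − (γ₁L)⁻¹∇ₓH(x,y)) − x` and
`v = prox_{g/(γ₂L)}(y − (γ₂L)⁻¹∇_yH((1−λ)(u+x)+λx, y)) − y`
is Lipschitz with constant `β(λ,γ₁,γ₂) = (6 + 4/γ₁² + (4+24(1−λ)²)/γ₂² + 16(1−λ)²/(γ₁²γ₂²))^{1/2}`
(stated in squared form with the Euclidean product norm). -/
theorem stmt_5 {n m : ℕ}
    (f : EuclideanSpace ℝ (Fin n) → EReal) (g : EuclideanSpace ℝ (Fin m) → EReal)
    (hfproper : ∃ u, f u ≠ ⊤) (hfnbot : ∀ u, f u ≠ ⊥) (hflsc : LowerSemicontinuous f)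
    (hfconv : ∀ a b : EuclideanSpace ℝ (Fin n), ∀ t : ℝ, 0 ≤ t → t ≤ 1 →
      f (t • a + (1 - t) • b) ≤ (t : EReal) * f a + ((1 - t : ℝ) : EReal) * f b)
    (hgproper : ∃ u, g u ≠ ⊤) (hgnbot : ∀ u, g u ≠ ⊥) (hglsc : LowerSemicontinuous g)
    (hgconv : ∀ a b : EuclideanSpace ℝ (Fin m), ∀ t : ℝ, 0 ≤ t → t ≤ 1 →
      g (t • a + (1 - t) • b) ≤ (t : EReal) * g a + ((1 - t : ℝ) : EReal) * g b)
    (H : EuclideanSpace ℝ (Fin n) × EuclideanSpace ℝ (Fin m) → ℝ)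
    (gx : EuclideanSpace ℝ (Fin n) × EuclideanSpace ℝ (Fin m) → EuclideanSpace ℝ (Fin n))
    (gy : EuclideanSpace ℝ (Fin n) × EuclideanSpace ℝ (Fin m) → EuclideanSpace ℝ (Fin m))
    (hgx : ∀ p, HasGradientAt (fun x' => H (x', p.2)) (gx p) p.1)
    (hgy : ∀ p, HasGradientAt (fun y' => H (p.1, y')) (gy p) p.2)
    (L γ₁ γ₂ lam : ℝ) (hL : 0 < L) (hγ₁ : 0 < γ₁) (hγ₂ : 0 < γ₂)
    (hlam0 : 0 ≤ lam) (hlam1 : lam ≤ 1)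
    (hLip : ∀ p q, ‖gx p - gx q‖ ^ 2 + ‖gy p - gy q‖ ^ 2
      ≤ L ^ 2 * (‖p.1 - q.1‖ ^ 2 + ‖p.2 - q.2‖ ^ 2))
    (proxf : EuclideanSpace ℝ (Fin n) → EuclideanSpace ℝ (Fin n))
    (proxg : EuclideanSpace ℝ (Fin m) → EuclideanSpace ℝ (Fin m))
    (hproxf : ∀ w u, f (proxf w) + ((γ₁ * L / 2 * ‖proxf w - w‖ ^ 2 : ℝ) : EReal)
      ≤ f u + ((γ₁ * L / 2 * ‖u - w‖ ^ 2 : ℝ) : EReal))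
    (hproxg : ∀ w u, g (proxg w) + ((γ₂ * L / 2 * ‖proxg w - w‖ ^ 2 : ℝ) : EReal)
      ≤ g u + ((γ₂ * L / 2 * ‖u - w‖ ^ 2 : ℝ) : EReal)) :
    ∀ (x x' : EuclideanSpace ℝ (Fin n)) (y y' : EuclideanSpace ℝ (Fin m))
      (u u' : EuclideanSpace ℝ (Fin n)) (v v' : EuclideanSpace ℝ (Fin m)),
      u = proxf (x - (γ₁ * L)⁻¹ • gx (x, y)) - x →
      u' = proxf (x' - (γ₁ * L)⁻¹ • gx (x', y')) - x' →
      v = proxg (y - (γ₂ * L)⁻¹ • gy ((1 - lam) • (u + x) + lam • x, y)) - y →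
      v' = proxg (y' - (γ₂ * L)⁻¹ • gy ((1 - lam) • (u' + x') + lam • x', y')) - y' →
      ‖u - u'‖ ^ 2 + ‖v - v'‖ ^ 2
        ≤ (6 + 4 / γ₁ ^ 2 + (4 + 24 * (1 - lam) ^ 2) / γ₂ ^ 2
            + 16 * (1 - lam) ^ 2 / (γ₁ ^ 2 * γ₂ ^ 2)) * (‖x - x'‖ ^ 2 + ‖y - y'‖ ^ 2) :=
  stmt_5_general f g hfproper hfnbot hfconv hgproper hgnbot hgconv gx gy L γ₁ γ₂ lam hL hγ₁ hγ₂
    hlam0 hlam1 hLip proxf proxg hproxf hproxg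
end

section
/- Let H : ℝ^n × ℝ^m → ℝ be differentiable with L-Lipschitz gradient, λ, μ ∈ [0,1], and γ₁, γ₂ > 0. For any x, ẋ, ẍ ∈ ℝ^n and y, ẏ, ÿ ∈ ℝ^m, the vector (ξ, η) with ξ = (∇ₓH(ẋ+x, ẏ+y) − ∇ₓH(x, (1−μ)(ẏ+y)+μy), ∇_yH(ẋ+x, ẏ+y) − ∇_yH((1−λ)(ẋ+x)+λx, y)) and η = −L(γ₁ẋ, γ₂ẏ) satisfies ‖(ξ,η)‖ ≤ L·(max{1+γ₁²+λ², 1+γ₂²+μ²})^{1/2}·‖(ẋ,ẏ)‖. -/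
open Set

/-- Subgradient bound: with `∇H = (∇ₓH, ∇_yH)` `L`-Lipschitz (Euclidean product norm),
`λ, μ ∈ [0,1]`, `γ₁, γ₂ > 0`, the vector `(ξ, η)` with
`ξ = (∇ₓH(ẋ+x, ẏ+y) − ∇ₓH(x, (1−μ)(ẏ+y)+μy), ∇_yH(ẋ+x, ẏ+y) − ∇_yH((1−λ)(ẋ+x)+λx, y))`
and `η = −L(γ₁ẋ, γ₂ẏ)` satisfies
`‖(ξ,η)‖ ≤ L·(max{1+γ₁²+λ², 1+γ₂²+μ²})^{1/2}·‖(ẋ,ẏ)‖`. -/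
theorem stmt_10 {n m : ℕ}
    (H : EuclideanSpace ℝ (Fin n) × EuclideanSpace ℝ (Fin m) → ℝ)
    (gx : EuclideanSpace ℝ (Fin n) × EuclideanSpace ℝ (Fin m) → EuclideanSpace ℝ (Fin n))
    (gy : EuclideanSpace ℝ (Fin n) × EuclideanSpace ℝ (Fin m) → EuclideanSpace ℝ (Fin m))
    (hgx : ∀ p, HasGradientAt (fun x' => H (x', p.2)) (gx p) p.1)
    (hgy : ∀ p, HasGradientAt (fun y' => H (p.1, y')) (gy p) p.2)
    (L γ₁ γ₂ lam μ : ℝ) (hL : 0 ≤ L) (hγ₁ : 0 < γ₁) (hγ₂ : 0 < γ₂)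
    (hlam0 : 0 ≤ lam) (hlam1 : lam ≤ 1) (hμ0 : 0 ≤ μ) (hμ1 : μ ≤ 1)
    (hLip : ∀ p q, ‖gx p - gx q‖ ^ 2 + ‖gy p - gy q‖ ^ 2
      ≤ L ^ 2 * (‖p.1 - q.1‖ ^ 2 + ‖p.2 - q.2‖ ^ 2))
    (x xd : EuclideanSpace ℝ (Fin n)) (y yd : EuclideanSpace ℝ (Fin m)) :
    Real.sqrt (‖gx (xd + x, yd + y) - gx (x, (1 - μ) • (yd + y) + μ • y)‖ ^ 2
        + ‖gy (xd + x, yd + y) - gy ((1 - lam) • (xd + x) + lam • x, y)‖ ^ 2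
        + ‖(-(L * γ₁)) • xd‖ ^ 2 + ‖(-(L * γ₂)) • yd‖ ^ 2)
      ≤ L * Real.sqrt (max (1 + γ₁ ^ 2 + lam ^ 2) (1 + γ₂ ^ 2 + μ ^ 2))
          * Real.sqrt (‖xd‖ ^ 2 + ‖yd‖ ^ 2) := by
  set a := ‖xd‖ with ha
  set b := ‖yd‖ with hb
  have ha0 : 0 ≤ a := norm_nonneg _
  have hb0 : 0 ≤ b := norm_nonneg _
  have h1 : ‖gx (xd + x, yd + y) - gx (x, (1 - μ) • (yd + y) + μ • y)‖ ^ 2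
      ≤ L ^ 2 * (a ^ 2 + μ ^ 2 * b ^ 2) := by
    have h := hLip (xd + x, yd + y) (x, (1 - μ) • (yd + y) + μ • y)
    simp only at h
    have e1 : xd + x - x = xd := by abel
    have e2 : (yd + y) - ((1 - μ) • (yd + y) + μ • y) = μ • yd := by
      rw [sub_smul, one_smul]; module
    rw [e1, e2, norm_smul] at h
    have hμabs : ‖μ‖ = μ := abs_of_nonneg hμ0
    rw [hμabs] at h
    nlinarith [sq_nonneg ‖gy (xd + x, yd + y) - gy (x, (1 - μ) • (yd + y) + μ • y)‖]
  have h2 : ‖gy (xd + x, yd + y) - gy ((1 - lam) • (xd + x) + lam • x, y)‖ ^ 2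
      ≤ L ^ 2 * (lam ^ 2 * a ^ 2 + b ^ 2) := by
    have h := hLip (xd + x, yd + y) ((1 - lam) • (xd + x) + lam • x, y)
    simp only at h
    have e1 : (xd + x) - ((1 - lam) • (xd + x) + lam • x) = lam • xd := by
      rw [sub_smul, one_smul]; module
    have e2 : yd + y - y = yd := by abel
    rw [e1, e2, norm_smul, Real.norm_eq_abs, abs_of_nonneg hlam0] at h
    nlinarith [sq_nonneg ‖gx (xd + x, yd + y) - gx ((1 - lam) • (xd + x) + lam • x, y)‖]
  have h3 : ‖(-(L * γ₁)) • xd‖ ^ 2 = L ^ 2 * γ₁ ^ 2 * a ^ 2 := by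
    rw [norm_smul]; rw [norm_neg, Real.norm_eq_abs]
    rw [abs_of_nonneg (by positivity)]; ring
  have h4 : ‖(-(L * γ₂)) • yd‖ ^ 2 = L ^ 2 * γ₂ ^ 2 * b ^ 2 := by
    rw [norm_smul]; rw [norm_neg, Real.norm_eq_abs]
    rw [abs_of_nonneg (by positivity)]; ring
  set M := max (1 + γ₁ ^ 2 + lam ^ 2) (1 + γ₂ ^ 2 + μ ^ 2) with hM
  have hM0 : 0 ≤ M := le_trans (by positivity) (le_max_left _ _)
  have key : ‖gx (xd + x, yd + y) - gx (x, (1 - μ) • (yd + y) + μ • y)‖ ^ 2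
        + ‖gy (xd + x, yd + y) - gy ((1 - lam) • (xd + x) + lam • x, y)‖ ^ 2
        + ‖(-(L * γ₁)) • xd‖ ^ 2 + ‖(-(L * γ₂)) • yd‖ ^ 2
      ≤ L ^ 2 * M * (a ^ 2 + b ^ 2) := by
    rw [h3, h4]
    have hmx : 1 + γ₁ ^ 2 + lam ^ 2 ≤ M := le_max_left _ _
    have hmy : 1 + γ₂ ^ 2 + μ ^ 2 ≤ M := le_max_right _ _
    nlinarith [sq_nonneg L, sq_nonneg a, sq_nonneg b, sq_nonneg (L*a), sq_nonneg (L*b)]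
  calc Real.sqrt (‖gx (xd + x, yd + y) - gx (x, (1 - μ) • (yd + y) + μ • y)‖ ^ 2
        + ‖gy (xd + x, yd + y) - gy ((1 - lam) • (xd + x) + lam • x, y)‖ ^ 2
        + ‖(-(L * γ₁)) • xd‖ ^ 2 + ‖(-(L * γ₂)) • yd‖ ^ 2)
      ≤ Real.sqrt (L ^ 2 * M * (a ^ 2 + b ^ 2)) := Real.sqrt_le_sqrt key
    _ = L * Real.sqrt M * Real.sqrt (a ^ 2 + b ^ 2) := by
        rw [Real.sqrt_mul (by positivity), Real.sqrt_mul (by positivity)]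
        rw [Real.sqrt_sq hL]
end

section
/- Let f : ℝ^n → ℝ ∪ {+∞} be proper and lower semicontinuous, H : ℝ^n × ℝ^m → ℝ be continuous, γ₁, L > 0. Suppose sequences (x_k), (p_k) in ℝ^n, (w_k) in ℝ^m satisfy: p_k minimizes u ↦ f(u) + (γ₁L/2)‖u − x_k‖² + ⟨u − x_k, ∇ₓH(x_k, w_k)⟩ over ℝ^n for each k, x_k → x̄, p_k → x̄, p_k − x_k → 0, and w_k → w̄, with ∇ₓH continuous. Then f(p_k) → f(x̄). -/
open Set Filter

/-! Lower semicontinuity gives `f x̄ ≤ liminf f(p_k)`. For the reverse inequality compare the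
value of the prox objective at its minimizer `p_k` with its value at `x̄`: the two quadratic
model terms are built from `p_k - x_k → 0` and `x̄ - x_k → 0` against the convergent gradients
`∇ₓH(x_k, w_k)`, so both vanish and `limsup f(p_k) ≤ f x̄`. -/

theorem tendsto_mul_norm_sq_add_inner_of_tendsto_zero {ι E : Type*} [NormedAddCommGroup E]
    [InnerProductSpace ℝ E] {l : Filter ι} {d g : ι → E} {g₀ : E} (c : ℝ)
    (hd : Tendsto d l (nhds 0)) (hg : Tendsto g l (nhds g₀)) :
    Tendsto (fun k => c * ‖d k‖ ^ 2 + inner ℝ (d k) (g k)) l (nhds 0) := by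
  have hsq : Tendsto (fun k => ‖d k‖ ^ 2) l (nhds 0) := by
    simpa using hd.norm.pow 2
  simpa using (hsq.const_mul c).add (hd.inner hg)

theorem EReal.limsup_le_of_add_coe_le_add_coe {ι : Type*} {l : Filter ι} [l.NeBot] {u : ι → EReal}
    {c : EReal} {a b : ι → ℝ} (ha : Tendsto a l (nhds 0)) (hb : Tendsto b l (nhds 0))
    (hle : ∀ k, u k + a k ≤ c + b k) :
    limsup u l ≤ c := by
  have hshift : ∀ k, u k ≤ c + ((b k - a k : ℝ) : EReal) := fun k => by
    have := add_le_add_left (hle k) ((-a k : ℝ) : EReal)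
    rwa [add_assoc, add_assoc, ← EReal.coe_add, ← EReal.coe_add, add_neg_cancel,
      EReal.coe_zero, add_zero, ← sub_eq_add_neg] at this
  have hlim : Tendsto (fun k => c + ((b k - a k : ℝ) : EReal)) l (nhds c) := by
    have hba : Tendsto (fun k => ((b k - a k : ℝ) : EReal)) l (nhds 0) := by
      simpa only [sub_zero, EReal.coe_zero] using EReal.tendsto_coe.2 (hb.sub ha)
    simpa only [add_zero, Function.comp_def] using
      (EReal.continuousAt_add (p := (c, 0)) (Or.inr EReal.zero_ne_bot)
        (Or.inr EReal.zero_ne_top)).tendsto.comp (tendsto_const_nhds.prodMk_nhds hba)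
  calc limsup u l ≤ limsup (fun k => c + ((b k - a k : ℝ) : EReal)) l :=
        limsup_le_limsup (Eventually.of_forall hshift)
    _ = c := hlim.limsup_eq

theorem LowerSemicontinuous.le_liminf_comp {α β γ : Type*} [TopologicalSpace α]
    [CompleteLinearOrder γ] {f : α → γ} (hf : LowerSemicontinuous f) {l : Filter β} {p : β → α}
    {x : α} (hp : Tendsto p l (nhds x)) :
    f x ≤ liminf (fun k => f (p k)) l :=
  (le_liminf_iff).2 fun _ hy => hp.eventually (hf x _ hy)

theorem stmt_16_general {n m : ℕ}
    (f : EuclideanSpace ℝ (Fin n) → EReal)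
    (hlsc : LowerSemicontinuous f)
    (gx : EuclideanSpace ℝ (Fin n) × EuclideanSpace ℝ (Fin m) → EuclideanSpace ℝ (Fin n))
    (hgxcont : Continuous gx)
    (γ₁ L : ℝ)
    (x p : ℕ → EuclideanSpace ℝ (Fin n)) (w : ℕ → EuclideanSpace ℝ (Fin m))
    (xbar : EuclideanSpace ℝ (Fin n)) (wbar : EuclideanSpace ℝ (Fin m))
    (hmin : ∀ k, ∀ u : EuclideanSpace ℝ (Fin n),
      f (p k) + ((γ₁ * L / 2 * ‖p k - x k‖ ^ 2
          + (inner ℝ (p k - x k) (gx (x k, w k)) : ℝ) : ℝ) : EReal)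
        ≤ f u + ((γ₁ * L / 2 * ‖u - x k‖ ^ 2
          + (inner ℝ (u - x k) (gx (x k, w k)) : ℝ) : ℝ) : EReal))
    (hx : Tendsto x atTop (nhds xbar))
    (hp : Tendsto p atTop (nhds xbar))
    (hpx : Tendsto (fun k => p k - x k) atTop (nhds 0))
    (hw : Tendsto w atTop (nhds wbar)) :
    Tendsto (fun k => f (p k)) atTop (nhds (f xbar)) := by
  have hg : Tendsto (fun k => gx (x k, w k)) atTop (nhds (gx (xbar, wbar))) :=
    (hgxcont.tendsto _).comp (hx.prodMk_nhds hw)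
  have hxbar : Tendsto (fun k => xbar - x k) atTop (nhds 0) := by
    simpa using hx.const_sub xbar
  refine tendsto_of_le_liminf_of_limsup_le (hlsc.le_liminf_comp hp) ?_
  exact EReal.limsup_le_of_add_coe_le_add_coe
    (tendsto_mul_norm_sq_add_inner_of_tendsto_zero _ hpx hg)
    (tendsto_mul_norm_sq_add_inner_of_tendsto_zero _ hxbar hg) (fun k => hmin k xbar)

/-- Continuity of function values along prox sequences: if `f` is proper lsc, `∇ₓH` (here `gx`)
is continuous, each `p_k` minimizes `u ↦ f(u) + (γ₁L/2)‖u − x_k‖² + ⟨u − x_k, ∇ₓH(x_k, w_k)⟩`,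
and `x_k → x̄`, `p_k → x̄`, `p_k − x_k → 0`, `w_k → w̄`, then `f(p_k) → f(x̄)`. -/
theorem stmt_16 {n m : ℕ}
    (f : EuclideanSpace ℝ (Fin n) → EReal)
    (hproper : ∃ u, f u ≠ ⊤) (hnbot : ∀ u, f u ≠ ⊥) (hlsc : LowerSemicontinuous f)
    (H : EuclideanSpace ℝ (Fin n) × EuclideanSpace ℝ (Fin m) → ℝ) (hH : Continuous H)
    (gx : EuclideanSpace ℝ (Fin n) × EuclideanSpace ℝ (Fin m) → EuclideanSpace ℝ (Fin n))
    (hgx : ∀ p, HasGradientAt (fun x' => H (x', p.2)) (gx p) p.1)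
    (hgxcont : Continuous gx)
    (γ₁ L : ℝ) (hγ₁ : 0 < γ₁) (hL : 0 < L)
    (x p : ℕ → EuclideanSpace ℝ (Fin n)) (w : ℕ → EuclideanSpace ℝ (Fin m))
    (xbar : EuclideanSpace ℝ (Fin n)) (wbar : EuclideanSpace ℝ (Fin m))
    (hmin : ∀ k, ∀ u : EuclideanSpace ℝ (Fin n),
      f (p k) + ((γ₁ * L / 2 * ‖p k - x k‖ ^ 2
          + (inner ℝ (p k - x k) (gx (x k, w k)) : ℝ) : ℝ) : EReal)
        ≤ f u + ((γ₁ * L / 2 * ‖u - x k‖ ^ 2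
          + (inner ℝ (u - x k) (gx (x k, w k)) : ℝ) : ℝ) : EReal))
    (hx : Tendsto x atTop (nhds xbar))
    (hp : Tendsto p atTop (nhds xbar))
    (hpx : Tendsto (fun k => p k - x k) atTop (nhds 0))
    (hw : Tendsto w atTop (nhds wbar)) :
    Tendsto (fun k => f (p k)) atTop (nhds (f xbar)) :=
  stmt_16_general f hlsc gx hgxcont γ₁ L x p w xbar wbar hmin hx hp hpx hw
end
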